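/- Dingle–Paris–Olver special case: for fixed complex a, b and every nonnegative integer M, Γ(a+n)Γ(b+n)/(Γ(1+n)Γ(a+b-1+n)) = 1 + Σ_{m=1}^{M} (1-a)_m (1-b)_m / (m! (2-a-b-n)_m) + O(n^{-M-1}) as n → ∞ through positive integers. -/

import Mathlib

/-!
Write `F n` for the quotient of Gamma functions and `S n` for the truncated series. `F` satisfies
the recurrence `(1 + n) (a + b - 1 + n) F (n + 1) = (a + n) (b + n) F n`, and the terms of `S`
satisfy the same recurrence up to a telescoping defect, so `S (n + 1) / F (n + 1) - S n / F n` is a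
single explicit term of size `O(n ^ (-M - 2))`. Since `F n → 1` (Euler's limit formula for `Γ`) and
`S n → 1`, summing these differences from `n` to `∞` gives `1 - S n / F n = O(n ^ (-M - 1))`, and
multiplying by the bounded `F n` gives the expansion.
-/

open Complex Polynomial Filter Asymptotics

noncomputable def poch (x : ℂ) (m : ℕ) : ℂ := (ascPochhammer ℂ m).eval x

open Topology

lemma poch_zero (x : ℂ) : poch x 0 = 1 := by simp [poch]

lemma poch_succ (x : ℂ) (m : ℕ) : poch x (m + 1) = poch x m * (x + m) :=
  ascPochhammer_succ_eval m x

lemma poch_succ_left (x : ℂ) (m : ℕ) : poch x (m + 1) = x * poch (x + 1) m := by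
  simp [poch, ascPochhammer_succ_left, eval_comp]

lemma poch_ne_zero_of_le {x : ℂ} {m M : ℕ} (h : poch x M ≠ 0) (hm : m ≤ M) : poch x m ≠ 0 := by
  obtain ⟨k, rfl⟩ := Nat.exists_eq_add_of_le hm
  rw [poch, ← ascPochhammer_mul, eval_mul] at h
  exact left_ne_zero_of_mul h

lemma poch_eq_prod_range (x : ℂ) (m : ℕ) : poch x m = ∏ j ∈ Finset.range m, (x + j) := by
  induction m with
  | zero => simp [poch_zero]
  | succ m ih => rw [poch_succ, ih, Finset.prod_range_succ]

lemma norm_le_of_norm_sub_succ_le {E : Type*} [SeminormedAddCommGroup E] {u : ℕ → E} {v : ℕ → ℝ}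
    (hu : Tendsto u atTop (𝓝 0)) (hv : Tendsto v atTop (𝓝 0)) {n : ℕ}
    (h : ∀ m, n ≤ m → ‖u m - u (m + 1)‖ ≤ v m - v (m + 1)) : ‖u n‖ ≤ v n := by
  have key : ∀ k, ‖u n - u (k + n)‖ ≤ v n - v (k + n) := by
    intro k
    induction k with
    | zero => simp
    | succ k ih =>
      have := h (k + n) (Nat.le_add_left n k)
      rw [Nat.add_right_comm]
      linarith [norm_sub_le_norm_sub_add_norm_sub (u n) (u (k + n)) (u (k + n + 1))]
  have hu' := ((tendsto_const_nhds (x := u n)).sub (hu.comp (tendsto_add_atTop_nat n))).norm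
  have hv' := (tendsto_const_nhds (x := v n)).sub (hv.comp (tendsto_add_atTop_nat n))
  simpa using le_of_tendsto_of_tendsto' hu' hv' key

lemma inv_sq_le_two_mul_inv_sub_inv {x : ℝ} (hx : 1 ≤ x) : x⁻¹ ^ 2 ≤ 2 * (x⁻¹ - (x + 1)⁻¹) := by
  have hx0 : 0 < x := by linarith
  rw [inv_sub_inv hx0.ne' (by linarith), inv_pow, ← one_div, ← mul_div_assoc,
    div_le_div_iff₀ (by positivity) (by positivity)]
  nlinarith

lemma isBigO_inv_pow_succ_of_sub_succ {E : Type*} [SeminormedAddCommGroup E] {u : ℕ → E} {p : ℕ}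
    (hu : Tendsto u atTop (𝓝 0))
    (h : (fun n => u n - u (n + 1)) =O[atTop] fun n => (n : ℝ)⁻¹ ^ (p + 2)) :
    u =O[atTop] fun n => (n : ℝ)⁻¹ ^ (p + 1) := by
  obtain ⟨C, hC, hbound⟩ := h.exists_pos
  obtain ⟨N, hN⟩ := eventually_atTop.mp hbound.bound
  refine IsBigO.of_bound (2 * C) ?_
  filter_upwards [eventually_ge_atTop (max N 1)] with n hn
  have hn1 : (1 : ℝ) ≤ n := by exact_mod_cast le_of_max_le_right hn
  -- For `m ≥ n`, `C m⁻¹ ^ (p + 2) ≤ v m - v (m + 1)` with the telescoping majorant `v m` below.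
  have hv : Tendsto (fun m : ℕ => 2 * C * (n : ℝ)⁻¹ ^ p * (m : ℝ)⁻¹) atTop (𝓝 0) := by
    simpa using tendsto_const_nhds.mul (tendsto_inv_atTop_nhds_zero_nat (𝕜 := ℝ))
  have key := norm_le_of_norm_sub_succ_le hu hv fun m hm => by
    have hm1 : (1 : ℝ) ≤ m := hn1.trans (by exact_mod_cast hm)
    calc ‖u m - u (m + 1)‖ ≤ C * (m : ℝ)⁻¹ ^ p * (m : ℝ)⁻¹ ^ 2 := by
          simpa [pow_add, mul_assoc] using hN m ((le_max_left _ _).trans (hn.trans hm))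
      _ ≤ C * (n : ℝ)⁻¹ ^ p * (2 * ((m : ℝ)⁻¹ - ((m : ℝ) + 1)⁻¹)) := by
          gcongr
          exact inv_sq_le_two_mul_inv_sub_inv hm1
      _ = _ := by push_cast; ring
  simpa [pow_succ, mul_assoc] using key

lemma tendsto_add_natCast_mul_inv (c : ℂ) :
    Tendsto (fun n : ℕ => (c + n) * (n : ℂ)⁻¹) atTop (𝓝 1) := by
  have := (tendsto_natCast_div_add_atTop c).inv₀ one_ne_zero
  simpa [inv_div, div_eq_mul_inv, add_comm] using this

lemma isBigO_inv_of_tendsto_mul_inv_pow {u : ℕ → ℂ} {p : ℕ} {L : ℂ} (hL : L ≠ 0)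
    (h : Tendsto (fun n => u n * (n : ℂ)⁻¹ ^ p) atTop (𝓝 L)) :
    (fun n => (u n)⁻¹) =O[atTop] fun n => (n : ℝ)⁻¹ ^ p := by
  have hpow : (fun n : ℕ => (n : ℂ)⁻¹ ^ p) =O[atTop] fun n => (n : ℝ)⁻¹ ^ p :=
    isBigO_of_le _ fun n => by simp
  refine (((h.inv₀ hL).isBigO_one ℝ).mul hpow).congr' ?_ (by simp)
  filter_upwards [eventually_ne_atTop 0] with n hn
  have : (n : ℂ)⁻¹ ^ p ≠ 0 := pow_ne_zero _ (by simpa using hn)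
  rw [mul_inv, inv_mul_cancel_right₀ this]

lemma eventually_add_natCast_ne_zero (c : ℂ) : ∀ᶠ n : ℕ in atTop, c + n ≠ 0 :=
  ((tendsto_add_natCast_mul_inv c).eventually_ne one_ne_zero).mono fun _ h => left_ne_zero_of_mul h

lemma tendsto_poch_sub_natCast_mul_inv_pow (c : ℂ) (m : ℕ) :
    Tendsto (fun n : ℕ => poch (c - n) m * (n : ℂ)⁻¹ ^ m) atTop (𝓝 ((-1) ^ m)) := by
  induction m with
  | zero => simp [poch_zero]
  | succ m ih =>
    have h : Tendsto (fun n : ℕ => (c - n + m) * (n : ℂ)⁻¹) atTop (𝓝 (-1)) := by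
      refine (tendsto_add_natCast_mul_inv (-(c + m))).neg.congr fun n => ?_
      ring
    rw [pow_succ]
    refine (ih.mul h).congr fun n => ?_
    rw [poch_succ]
    ring

namespace Complex

lemma Gamma_div_GammaSeq {z : ℂ} (hz : 0 < z.re) (n : ℕ) :
    Gamma z / GammaSeq z n = Gamma (z + 1 + n) / ((n : ℂ) ^ z * n.factorial) := by
  have hΓ := Gamma_ne_zero_of_re_pos hz
  have hprod : Gamma (z + 1 + n) = Gamma z * ∏ j ∈ Finset.range (n + 1), (z + j) := by
    have hpole : ∀ k : ℕ, z ≠ -k := fun k h => by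
      simp [h] at hz
      linarith [k.cast_nonneg (α := ℝ)]
    rw [← poch_eq_prod_range, poch, ← Gamma_add_nat_div_Gamma_eq z hpole, mul_div_cancel₀ _ hΓ]
    push_cast
    ring_nf
  rw [GammaSeq, hprod, div_div_eq_mul_div, mul_div_assoc]

lemma tendsto_Gamma_add_natCast_div (z : ℂ) :
    Tendsto (fun n : ℕ => Gamma (z + n) / ((n : ℂ) ^ (z - 1) * n.factorial)) atTop (𝓝 1) := by
  -- Euler's limit formula gives the case `1 < re z`; `Γ (s + 1) = s Γ s` lowers `z` by one.
  obtain ⟨k, hk⟩ := exists_nat_gt (1 - z.re)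
  induction k generalizing z with
  | zero =>
    have hz : 0 < (z - 1).re := by simp at hk ⊢; linarith
    have hΓ := Gamma_ne_zero_of_re_pos hz
    have h := (tendsto_const_nhds (x := Gamma (z - 1))).div (GammaSeq_tendsto_Gamma (z - 1)) hΓ
    rw [div_self hΓ] at h
    refine h.congr fun n => ?_
    rw [Pi.div_apply, Gamma_div_GammaSeq hz, sub_add_cancel]
  | succ k ih =>
    have h := (tendsto_natCast_div_add_atTop z).mul (ih (z + 1) (by push_cast at hk ⊢; simp; linarith))
    rw [one_mul] at h
    refine h.congr' ?_
    filter_upwards [eventually_ne_atTop 0, eventually_add_natCast_ne_zero z] with n hn hzn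
    have hn' : (n : ℂ) ≠ 0 := Nat.cast_ne_zero.mpr hn
    have hnz : (n : ℂ) + z ≠ 0 := by rwa [add_comm]
    rw [add_right_comm, Gamma_add_one _ hzn, add_sub_cancel_right, cpow_sub _ _ hn', cpow_one]
    field_simp
    ring

end Complex

namespace DingleParisOlver

noncomputable def term (a b x : ℂ) (m : ℕ) : ℂ :=
  poch (1 - a) m * poch (1 - b) m / (m.factorial * poch (2 - a - b - x) m)

noncomputable def partialSum (a b : ℂ) (M : ℕ) (x : ℂ) : ℂ :=
  ∑ m ∈ Finset.range (M + 1), term a b x m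

-- For `m = 0` the truncated `m - 1` is harmless: the factor `m` kills the term.
noncomputable def defect (a b x : ℂ) (m : ℕ) : ℂ :=
  m * poch (1 - a) m * poch (1 - b) m / (m.factorial * poch (2 - a - b - x) (m - 1))

noncomputable def gammaRatio (a b x : ℂ) : ℂ :=
  Gamma (a + x) * Gamma (b + x) / (Gamma (1 + x) * Gamma (a + b - 1 + x))

lemma term_zero (a b x : ℂ) : term a b x 0 = 1 := by simp [term, poch_zero]

lemma partialSum_eq (a b : ℂ) (M : ℕ) (x : ℂ) :
    partialSum a b M x = 1 + ∑ m ∈ Finset.Icc 1 M, term a b x m := by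
  rw [partialSum, Finset.sum_range_succ', term_zero, add_comm, ← Finset.Ico_add_one_right_eq_Icc,
    Finset.sum_Ico_eq_sum_range, add_tsub_cancel_right]
  simp only [add_comm 1]

lemma term_telescope (a b x : ℂ) (m : ℕ) (hc : a + b - 1 + x ≠ 0)
    (hp : poch (2 - a - b - x) m ≠ 0) :
    (a + x) * (b + x) * term a b x m - (1 + x) * (a + b - 1 + x) * term a b (x + 1) m
      = defect a b x (m + 1) - defect a b x m := by
  cases m with
  | zero =>
    simp only [term, defect, poch_zero, poch_succ, Nat.factorial, Nat.sub_self]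
    push_cast
    ring
  | succ k =>
    obtain ⟨y, rfl⟩ : ∃ y, x = 2 - a - b - y := ⟨2 - a - b - x, by ring⟩
    have hy0 : 2 - a - b - (2 - a - b - y) = y := by ring
    have hy1 : 2 - a - b - (2 - a - b - y + 1) = y - 1 := by ring
    have hy1' : y - 1 ≠ 0 := fun h => hc (by linear_combination -h)
    rw [hy0, poch_succ] at hp
    obtain ⟨hpk, hyk⟩ := mul_ne_zero_iff.mp hp
    simp only [term, defect, hy0, hy1, Nat.add_sub_cancel, poch_succ_left (y - 1), sub_add_cancel,
      poch_succ y k, poch_succ (1 - a) (k + 1), poch_succ (1 - b) (k + 1), Nat.factorial_succ]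
    have hk : (k + 1 + 1 : ℂ) ≠ 0 := by exact_mod_cast (k + 1).succ_ne_zero
    push_cast
    field_simp
    ring

lemma partialSum_telescope (a b : ℂ) (M : ℕ) (x : ℂ) (hc : a + b - 1 + x ≠ 0)
    (hp : poch (2 - a - b - x) M ≠ 0) :
    (a + x) * (b + x) * partialSum a b M x - (1 + x) * (a + b - 1 + x) * partialSum a b M (x + 1)
      = defect a b x (M + 1) := by
  rw [partialSum, partialSum, Finset.mul_sum, Finset.mul_sum, ← Finset.sum_sub_distrib,
    Finset.sum_congr rfl fun m hm => term_telescope a b x m hc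
      (poch_ne_zero_of_le hp (Finset.mem_range_succ_iff.mp hm)),
    Finset.sum_range_sub (defect a b x)]
  simp [defect]

lemma gammaRatio_add_one (a b x : ℂ) (ha : a + x ≠ 0) (hb : b + x ≠ 0) (h1 : 1 + x ≠ 0)
    (hc : a + b - 1 + x ≠ 0) :
    (1 + x) * (a + b - 1 + x) * gammaRatio a b (x + 1) = (a + x) * (b + x) * gammaRatio a b x := by
  simp only [gammaRatio, ← add_assoc, Gamma_add_one _ ha, Gamma_add_one _ hb, Gamma_add_one _ h1,
    Gamma_add_one _ hc]
  field_simp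

lemma partialSum_div_gammaRatio_add_one (a b : ℂ) (M : ℕ) (x : ℂ) (hF : gammaRatio a b x ≠ 0)
    (ha : a + x ≠ 0) (hb : b + x ≠ 0) (h1 : 1 + x ≠ 0) (hc : a + b - 1 + x ≠ 0)
    (hp : poch (2 - a - b - x) M ≠ 0) :
    partialSum a b M (x + 1) / gammaRatio a b (x + 1) - partialSum a b M x / gammaRatio a b x
      = -defect a b x (M + 1) / ((a + x) * (b + x) * gammaRatio a b x) := by
  have hR := gammaRatio_add_one a b x ha hb h1 hc
  have hT := partialSum_telescope a b M x hc hp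
  have hF1 : gammaRatio a b (x + 1) ≠ 0 := by
    intro h
    rw [h, mul_zero] at hR
    exact mul_ne_zero (mul_ne_zero ha hb) hF hR.symm
  field_simp
  linear_combination (-gammaRatio a b (x + 1)) * hT - partialSum a b M (x + 1) * hR

lemma tendsto_gammaRatio (a b : ℂ) :
    Tendsto (fun n : ℕ => gammaRatio a b n) atTop (𝓝 1) := by
  have h := ((tendsto_Gamma_add_natCast_div a).mul (tendsto_Gamma_add_natCast_div b)).div
    (tendsto_Gamma_add_natCast_div (a + b - 1)) one_ne_zero
  rw [mul_one, div_one] at h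
  refine h.congr' ?_
  filter_upwards [eventually_ne_atTop 0] with n hn
  have hn' : (n : ℂ) ≠ 0 := Nat.cast_ne_zero.mpr hn
  have hpow : (n : ℂ) ^ (a - 1) * (n : ℂ) ^ (b - 1) = (n : ℂ) ^ (a + b - 1 - 1) := by
    rw [← cpow_add _ _ hn']
    ring_nf
  have hA : (n : ℂ) ^ (a - 1) ≠ 0 := by simp [hn']
  have hB : (n : ℂ) ^ (b - 1) ≠ 0 := by simp [hn']
  rw [Pi.div_apply, gammaRatio, add_comm 1, Gamma_nat_eq_factorial, ← hpow]
  field_simp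

lemma tendsto_term (a b : ℂ) {m : ℕ} (hm : m ≠ 0) :
    Tendsto (fun n : ℕ => term a b n m) atTop (𝓝 0) := by
  have hinv := (isBigO_inv_of_tendsto_mul_inv_pow (pow_ne_zero m (neg_ne_zero.mpr one_ne_zero))
    (tendsto_poch_sub_natCast_mul_inv_pow (2 - a - b) m)).trans_tendsto
    (by simpa [zero_pow hm] using (tendsto_inv_atTop_nhds_zero_nat (𝕜 := ℝ)).pow m)
  have h := hinv.const_mul (poch (1 - a) m * poch (1 - b) m / m.factorial)
  rw [mul_zero] at h
  refine h.congr fun n => ?_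
  rw [term]
  ring

lemma tendsto_partialSum (a b : ℂ) (M : ℕ) :
    Tendsto (fun n : ℕ => partialSum a b M n) atTop (𝓝 1) := by
  have h := tendsto_finsetSum (Finset.range M) fun m _ => tendsto_term a b m.succ_ne_zero
  simpa [partialSum, Finset.sum_range_succ', term_zero] using h.add_const 1

lemma isBigO_partialSum_div_gammaRatio_sub (a b : ℂ) (M : ℕ) :
    (fun n : ℕ => partialSum a b M (n + 1) / gammaRatio a b (n + 1)
      - partialSum a b M n / gammaRatio a b n) =O[atTop] fun n => (n : ℝ)⁻¹ ^ (M + 2) := by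
  set P := fun n : ℕ => poch (2 - a - b - n) M * ((a + n) * (b + n) * gammaRatio a b n)
  have hP : Tendsto (fun n => P n * (n : ℂ)⁻¹ ^ (M + 2)) atTop (𝓝 ((-1) ^ M)) := by
    have h := (tendsto_poch_sub_natCast_mul_inv_pow (2 - a - b) M).mul
      (((tendsto_add_natCast_mul_inv a).mul (tendsto_add_natCast_mul_inv b)).mul
        (tendsto_gammaRatio a b))
    rw [mul_one, mul_one, mul_one] at h
    exact h.congr fun n => by ring
  have hM : (-1 : ℂ) ^ M ≠ 0 := pow_ne_zero M (neg_ne_zero.mpr one_ne_zero)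
  refine ((isBigO_inv_of_tendsto_mul_inv_pow hM hP).const_mul_left
    (-((M + 1) * poch (1 - a) (M + 1) * poch (1 - b) (M + 1) / (M + 1).factorial))).congr' ?_
    EventuallyEq.rfl
  filter_upwards [hP.eventually_ne hM, eventually_add_natCast_ne_zero 1,
    eventually_add_natCast_ne_zero (a + b - 1)] with n hn h1 hc
  obtain ⟨⟨hp, ⟨ha, hb⟩, hF⟩, -⟩ := by simpa only [P, mul_ne_zero_iff] using hn
  rw [partialSum_div_gammaRatio_add_one a b M n hF ha hb h1 hc hp, defect, Nat.add_sub_cancel]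
  simp only [P, mul_inv, div_eq_mul_inv]
  push_cast
  ring

end DingleParisOlver

open DingleParisOlver

theorem dingle_paris_olver (a b : ℂ) (M : ℕ) :
    (fun n : ℕ => Complex.Gamma (a + n) * Complex.Gamma (b + n) /
        (Complex.Gamma (1 + n) * Complex.Gamma (a + b - 1 + n)) -
      (1 + ∑ m ∈ Finset.Icc 1 M,
        poch (1 - a) m * poch (1 - b) m /
          ((m.factorial : ℂ) * poch (2 - a - b - n) m))) =O[atTop]
      fun n : ℕ => (n : ℝ) ^ (-(M : ℤ) - 1) := by
  set q : ℕ → ℂ := fun n => 1 - partialSum a b M n / gammaRatio a b n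
  have hq : Tendsto q atTop (𝓝 0) := by
    simpa using (tendsto_const_nhds (x := (1 : ℂ))).sub
      ((tendsto_partialSum a b M).div (tendsto_gammaRatio a b) one_ne_zero)
  have hq' : q =O[atTop] fun n => (n : ℝ)⁻¹ ^ (M + 1) := by
    refine isBigO_inv_pow_succ_of_sub_succ hq
      ((isBigO_partialSum_div_gammaRatio_sub a b M).congr_left fun n => ?_)
    simp only [q, Nat.cast_succ]
    ring
  refine (((tendsto_gammaRatio a b).isBigO_one ℝ).mul hq').congr' ?_ ?_
  · filter_upwards [(tendsto_gammaRatio a b).eventually_ne one_ne_zero] with n hn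
    rw [mul_sub, mul_one, mul_div_cancel₀ _ hn, partialSum_eq]
    rfl
  · filter_upwards with n
    rw [one_mul, inv_pow, ← zpow_natCast, ← zpow_neg]
    push_cast
    ring_nf
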